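/- Let A₁ = (α_{jk}^{(1)}) and A₂ = (α_{jk}^{(2)}) both satisfy (H0) with the same n and the same intrinsic growth rates m_1,…,m_n, and for i = 1,2 let τ_i(d) := θ_i(d)/ν_i(d) be the first Hopf bifurcation value of the logistic patch model with dispersal matrix A_i, where (ν_i, θ_i) are the branch functions differentiable at 0 with ν_i(0) = m_q̂, θ_i(0) = π/2 along which d A_i + diag(m_j − U_i(d)_j) − e^{−iθ_i(d)} diag(U_i(d)_j) − iν_i(d)I is singular for d > 0 small. If T(A₁) > T(A₂), where T(A_i) := −(π/2)α_{q̂q̂}^{(i)} + (1 − π/2)(1/m_q̂) Σ_{k≠q̂} α_{q̂k}^{(i)} m_k, then there exists d̂ > 0 such that τ_1(d) > τ_2(d) for all d ∈ (0,d̂]. -/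

import Mathlib

open Matrix Filter Set

/-- Spectral bound of a real square matrix: the maximum of the real parts of its
complex eigenvalues. -/
noncomputable def specBound {n : ℕ} (M : Matrix (Fin n) (Fin n) ℝ) : ℝ :=
  sSup (Complex.re '' spectrum ℂ (M.map (fun x : ℝ => (x : ℂ))))

/-- The characteristic matrix of the logistic patch model at a purely imaginary
candidate root: `dA + diag(m_j − U(d)_j) − e^{−iθ} diag(U(d)_j) − iν I`. -/
noncomputable def logMat {n : ℕ} (A : Matrix (Fin n) (Fin n) ℝ) (m : Fin n → ℝ)
    (U : ℝ → Fin n → ℝ) (d ν th : ℝ) : Matrix (Fin n) (Fin n) ℂ :=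
  (d : ℂ) • A.map (fun x : ℝ => (x : ℂ))
    + Matrix.diagonal (fun j => ((m j - U d j : ℝ) : ℂ))
    - Complex.exp (-Complex.I * (th : ℂ)) •
        Matrix.diagonal (fun j => ((U d j : ℝ) : ℂ))
    - (Complex.I * (ν : ℂ)) • (1 : Matrix (Fin n) (Fin n) ℂ)

/-- Hypothesis (H0): essentially nonnegative, irreducible, with column sums
nonpositive and at least one strictly negative column sum. -/
def H0cond {n : ℕ} (A : Matrix (Fin n) (Fin n) ℝ) : Prop :=
  (∀ j k, j ≠ k → 0 ≤ A j k) ∧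
  (∀ S : Finset (Fin n), S.Nonempty → S ≠ Finset.univ →
    ∃ j ∉ S, ∃ k ∈ S, 0 < A j k) ∧
  (∀ j, ∑ k ∈ Finset.univ.erase j, A k j ≤ -A j j) ∧
  (∃ j, ∑ k ∈ Finset.univ.erase j, A k j < -A j j)


lemma ofRealC {f : ℝ → ℝ} {u x : ℝ} {s : Set ℝ} (hf : HasDerivWithinAt f u s x) :
    HasDerivWithinAt (fun y : ℝ => ((f y : ℝ) : ℂ)) (u : ℂ) s x := by
  simpa only [Function.comp_def, Complex.ofRealCLM_apply, Complex.ofReal_one, Complex.real_smul, mul_one] using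
    Complex.ofRealCLM.hasDerivAt.scomp_hasDerivWithinAt x hf

lemma expI : Complex.exp (-Complex.I * ((Real.pi / 2 : ℝ) : ℂ)) = -Complex.I := by
  have h : (-Complex.I * ((Real.pi / 2 : ℝ) : ℂ)) = ((-(Real.pi / 2) : ℝ) : ℂ) * Complex.I := by
    push_cast; ring
  rw [h, Complex.exp_mul_I, ← Complex.ofReal_cos, ← Complex.ofReal_sin]
  simp [Real.cos_pi_div_two, Real.sin_pi_div_two]

lemma key {n : ℕ} (A : Matrix (Fin n) (Fin n) ℝ) (m : Fin n → ℝ)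
    (hmd : ∀ j k : Fin n, j ≠ k → m j ≠ m k) (qhat : Fin n)
    (δ0 : ℝ) (hδ00 : 0 < δ0)
    (U : ℝ → Fin n → ℝ) (hU0 : U 0 = m) (hUC : ContDiffOn ℝ 1 U (Set.Ico 0 δ0))
    (hUeq : ∀ d, 0 < d → d < δ0 →
      ∀ j, d * ∑ k, A j k * U d k + U d j * (m j - U d j) = 0)
    (ν θ : ℝ → ℝ) (ν' θ' : ℝ)
    (hν : HasDerivWithinAt ν ν' (Set.Ici 0) 0) (hθ : HasDerivWithinAt θ θ' (Set.Ici 0) 0)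
    (hν0 : ν 0 = m qhat) (hθ0 : θ 0 = Real.pi / 2)
    (hsing : ∀ d, 0 < d → d < δ0 → (logMat A m U d (ν d) (θ d)).det = 0) :
    ∃ u' : ℝ, m qhat * u' = ∑ k, A qhat k * m k ∧ ν' = u' ∧ m qhat * θ' = u' - A qhat qhat := by
  have hmem : Set.Ico (0:ℝ) δ0 ∈ nhdsWithin (0:ℝ) (Set.Ici 0) := by
    rw [← Set.Ici_inter_Iio]
    exact inter_mem_nhdsWithin _ (Iio_mem_nhds hδ00)
  have hud : UniqueDiffWithinAt ℝ (Set.Ici (0:ℝ)) 0 := uniqueDiffOn_Ici 0 0 Set.self_mem_Ici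
  -- derivatives of U components
  have hUd : DifferentiableWithinAt ℝ U (Set.Ico 0 δ0) 0 :=
    (hUC.differentiableOn one_ne_zero) 0 ⟨le_rfl, hδ00⟩
  have hUdj : ∀ j, DifferentiableWithinAt ℝ (fun d => U d j) (Set.Ico 0 δ0) 0 :=
    fun j => (differentiableWithinAt_pi.1 hUd) j
  set u' : Fin n → ℝ := fun j => derivWithin (fun d => U d j) (Set.Ico 0 δ0) 0 with hu'def
  have hu : ∀ j, HasDerivWithinAt (fun d => U d j) (u' j) (Set.Ici 0) 0 :=
    fun j => ((hUdj j).hasDerivWithinAt).mono_of_mem_nhdsWithin hmem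
  -- Step 1: equilibrium equation derivative  ⇒  m qhat * u' qhat = ∑ k, A qhat k * m k
  have hsum : HasDerivWithinAt (fun d => ∑ k, A qhat k * U d k)
      (∑ k, A qhat k * u' k) (Set.Ici 0) 0 := by
    have := HasDerivWithinAt.fun_sum (u := (Finset.univ : Finset (Fin n)))
      (fun k _ => (hu k).const_mul (A qhat k))
    simpa using this
  have hg1 : HasDerivWithinAt (fun d => d * ∑ k, A qhat k * U d k)
      (1 * (∑ k, A qhat k * U 0 k) + 0 * (∑ k, A qhat k * u' k)) (Set.Ici 0) 0 :=
    (hasDerivWithinAt_id 0 _).mul hsum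
  have hg2 : HasDerivWithinAt (fun d => U d qhat * (m qhat - U d qhat))
      (u' qhat * (m qhat - U 0 qhat) + U 0 qhat * (0 - u' qhat)) (Set.Ici 0) 0 :=
    (hu qhat).mul ((hasDerivWithinAt_const _ _ _).sub (hu qhat))
  have hG : HasDerivWithinAt
      (fun d => d * ∑ k, A qhat k * U d k + U d qhat * (m qhat - U d qhat))
      ((∑ k, A qhat k * m k) - m qhat * u' qhat) (Set.Ici 0) 0 := by
    have h := hg1.add hg2
    simp only [hU0] at h
    refine h.congr_deriv ?_
    ring
  have hGzero : (∑ k, A qhat k * m k) - m qhat * u' qhat = 0 := by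
    have hz : HasDerivWithinAt
        (fun d => d * ∑ k, A qhat k * U d k + U d qhat * (m qhat - U d qhat))
        0 (Set.Ici 0) 0 := by
      refine (hasDerivWithinAt_const 0 _ (0:ℝ)).congr_of_eventuallyEq
        (Filter.eventuallyEq_of_mem hmem fun d hd => ?_) (by simp [hU0])
      rcases eq_or_lt_of_le hd.1 with h0 | h0
      · simp [← h0, hU0]
      · exact hUeq d h0 hd.2 qhat
    exact hud.eq_deriv _ hG hz
  -- Step 2: determinant derivative
  have hθC : HasDerivWithinAt (fun d => ((θ d : ℝ) : ℂ)) (θ' : ℂ) (Set.Ici 0) 0 := ofRealC hθ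
  have hνC : HasDerivWithinAt (fun d => ((ν d : ℝ) : ℂ)) (ν' : ℂ) (Set.Ici 0) 0 := ofRealC hν
  have hexp0 : Complex.exp (-Complex.I * ((θ 0 : ℝ) : ℂ)) = -Complex.I := by
    rw [hθ0]; exact expI
  have hexp : HasDerivWithinAt (fun d => Complex.exp (-Complex.I * ((θ d : ℝ) : ℂ)))
      (-(θ' : ℂ)) (Set.Ici 0) 0 := by
    have h1 : HasDerivWithinAt (fun d => -Complex.I * ((θ d : ℝ) : ℂ))
        (-Complex.I * (θ' : ℂ)) (Set.Ici 0) 0 := hθC.const_mul _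
    have h2 := h1.cexp
    simp only [hexp0] at h2
    convert h2 using 1
    linear_combination (-(θ' : ℂ)) * Complex.I_mul_I
  set E' : Fin n → Fin n → ℂ := fun j k => (A j k : ℂ) +
    (if j = k then ((θ' * m j - u' j : ℝ) : ℂ) + Complex.I * ((u' j - ν' : ℝ) : ℂ) else 0)
    with hE'def
  have hEnt : ∀ j k, HasDerivWithinAt (fun d => logMat A m U d (ν d) (θ d) j k)
      (E' j k) (Set.Ici 0) 0 := by
    intro j k
    by_cases hjk : j = k
    · subst hjk
      have hfun : (fun d => logMat A m U d (ν d) (θ d) j j) =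
          fun d => ((d : ℝ) : ℂ) * (A j j : ℂ) + ((m j - U d j : ℝ) : ℂ)
            - Complex.exp (-Complex.I * ((θ d : ℝ) : ℂ)) * ((U d j : ℝ) : ℂ)
            - Complex.I * ((ν d : ℝ) : ℂ) := by
        funext d
        simp [logMat, Matrix.add_apply, Matrix.sub_apply, Matrix.smul_apply,
          Matrix.map_apply, Matrix.diagonal_apply_eq, Matrix.one_apply_eq, smul_eq_mul,
          mul_comm]
      rw [hfun]
      have hid : HasDerivWithinAt (fun d : ℝ => ((d : ℝ) : ℂ) * (A j j : ℂ))
          ((1 : ℂ) * (A j j : ℂ)) (Set.Ici 0) 0 :=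
        (ofRealC (hasDerivWithinAt_id 0 _)).mul_const _
      have h2 : HasDerivWithinAt (fun d => ((m j - U d j : ℝ) : ℂ))
          (((0 - u' j : ℝ)) : ℂ) (Set.Ici 0) 0 :=
        ofRealC ((hasDerivWithinAt_const _ _ _).sub (hu j))
      have h3 : HasDerivWithinAt
          (fun d => Complex.exp (-Complex.I * ((θ d : ℝ) : ℂ)) * ((U d j : ℝ) : ℂ))
          (-(θ' : ℂ) * ((U 0 j : ℝ) : ℂ) + Complex.exp (-Complex.I * ((θ 0 : ℝ) : ℂ)) * ((u' j : ℝ) : ℂ))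
          (Set.Ici 0) 0 := hexp.mul (ofRealC (hu j))
      have h4 : HasDerivWithinAt (fun d => Complex.I * ((ν d : ℝ) : ℂ))
          (Complex.I * (ν' : ℂ)) (Set.Ici 0) 0 := hνC.const_mul _
      have h := ((hid.add h2).sub h3).sub h4
      simp only [hU0, hexp0] at h
      refine h.congr_deriv ?_
      simp only [hE'def, if_pos rfl]
      push_cast
      ring
    · have hfun : (fun d => logMat A m U d (ν d) (θ d) j k) =
          fun d => ((d : ℝ) : ℂ) * (A j k : ℂ) := by
        funext d
        simp [logMat, Matrix.add_apply, Matrix.sub_apply, Matrix.smul_apply,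
          Matrix.map_apply, Matrix.diagonal_apply_ne' ,Matrix.diagonal_apply, hjk,
          Matrix.one_apply_ne hjk, smul_eq_mul]
      rw [hfun]
      have hid : HasDerivWithinAt (fun d : ℝ => ((d : ℝ) : ℂ) * (A j k : ℂ))
          ((1 : ℂ) * (A j k : ℂ)) (Set.Ici 0) 0 :=
        (ofRealC (hasDerivWithinAt_id 0 _)).mul_const _
      convert hid using 1
      simp [hE'def, hjk]
  -- value of logMat at d = 0
  have hM0 : ∀ j k : Fin n, logMat A m U 0 (ν 0) (θ 0) j k =
      if j = k then Complex.I * ((m j : ℂ) - (m qhat : ℂ)) else 0 := by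
    intro j k
    by_cases hjk : j = k
    · subst hjk
      simp only [logMat, Matrix.sub_apply, Matrix.add_apply, Matrix.smul_apply,
        Matrix.map_apply, Matrix.diagonal_apply_eq, Matrix.one_apply_eq, smul_eq_mul,
        hU0, hν0, hexp0, if_pos rfl]
      push_cast
      ring
    · simp [logMat, Matrix.sub_apply, Matrix.add_apply, Matrix.smul_apply,
        Matrix.map_apply, Matrix.diagonal_apply, hjk, Matrix.one_apply_ne hjk, smul_eq_mul]
  -- derivative of the determinant
  set D : ℂ := ∑ σ : Equiv.Perm (Fin n), ((Equiv.Perm.sign σ : ℤ) : ℂ) *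
      ∑ i, (∏ j ∈ Finset.univ.erase i, logMat A m U 0 (ν 0) (θ 0) (σ j) j) • E' (σ i) i
      with hDdef
  have hdet : HasDerivWithinAt (fun d => (logMat A m U d (ν d) (θ d)).det) D (Set.Ici 0) 0 := by
    have hfun : (fun d => (logMat A m U d (ν d) (θ d)).det) =
        fun d => ∑ σ : Equiv.Perm (Fin n), ((Equiv.Perm.sign σ : ℤ) : ℂ) *
          ∏ i, logMat A m U d (ν d) (θ d) (σ i) i := by
      funext d; exact Matrix.det_apply' _
    rw [hfun, hDdef]
    exact HasDerivWithinAt.fun_sum fun σ _ =>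
      (HasDerivWithinAt.fun_finsetProd fun i _ => hEnt (σ i) i).const_mul _
  -- determinant vanishes on [0, δ0)
  have hdet0 : (logMat A m U 0 (ν 0) (θ 0)).det = 0 := by
    have : logMat A m U 0 (ν 0) (θ 0) =
        Matrix.diagonal (fun j => Complex.I * ((m j : ℂ) - (m qhat : ℂ))) := by
      ext j k
      rw [hM0 j k, Matrix.diagonal_apply]
    rw [this, Matrix.det_diagonal]
    exact Finset.prod_eq_zero (Finset.mem_univ qhat) (by simp)
  have hDzero : D = 0 := by
    have hz : HasDerivWithinAt (fun d => (logMat A m U d (ν d) (θ d)).det)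
        0 (Set.Ici 0) 0 := by
      refine (hasDerivWithinAt_const 0 _ (0:ℂ)).congr_of_eventuallyEq
        (Filter.eventuallyEq_of_mem hmem fun d hd => ?_) (by simp [hdet0])
      rcases eq_or_lt_of_le hd.1 with h0 | h0
      · simp [← h0, hdet0]
      · exact hsing d h0 hd.2
    exact hud.eq_deriv _ hdet hz
  -- evaluate D
  have hDval : D = (∏ j ∈ Finset.univ.erase qhat,
      (Complex.I * ((m j : ℂ) - (m qhat : ℂ)))) * E' qhat qhat := by
    rw [hDdef]
    rw [Finset.sum_eq_single (1 : Equiv.Perm (Fin n))]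
    · simp only [Equiv.Perm.sign_one, Units.val_one, Int.cast_one, one_mul,
        Equiv.Perm.one_apply]
      rw [Finset.sum_eq_single qhat]
      · rw [Finset.prod_congr rfl (fun j hj => by
          rw [hM0 j j, if_pos rfl])]
        rw [smul_eq_mul]
      · intro i _ hi
        have hmem' : qhat ∈ Finset.univ.erase i := Finset.mem_erase.2 ⟨Ne.symm hi, Finset.mem_univ _⟩
        rw [Finset.prod_eq_zero hmem' (by rw [hM0 qhat qhat, if_pos rfl]; ring), zero_smul]
      · intro h; exact absurd (Finset.mem_univ qhat) h
    · intro σ _ hσ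
      have hp : ∃ p : Fin n, σ p ≠ p := by
        by_contra h
        push_neg at h
        exact hσ (Equiv.ext h)
      obtain ⟨p, hp⟩ := hp
      have hq2 : σ (σ p) ≠ σ p := fun h => hp (σ.injective h)
      refine mul_eq_zero_of_right _ (Finset.sum_eq_zero fun i _ => ?_)
      have : ∃ r : Fin n, r ≠ i ∧ σ r ≠ r := by
        by_cases hpi : p = i
        · exact ⟨σ p, by rw [← hpi]; exact hp, hq2⟩
        · exact ⟨p, hpi, hp⟩
      obtain ⟨r, hri, hr⟩ := this
      have hrmem : r ∈ Finset.univ.erase i := Finset.mem_erase.2 ⟨hri, Finset.mem_univ _⟩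
      rw [Finset.prod_eq_zero hrmem (by rw [hM0 (σ r) r, if_neg hr]), zero_smul]
    · intro h; exact absurd (Finset.mem_univ _) h
  -- leading coefficient is nonzero
  have hcne : (∏ j ∈ Finset.univ.erase qhat,
      (Complex.I * ((m j : ℂ) - (m qhat : ℂ)))) ≠ 0 := by
    rw [Finset.prod_ne_zero_iff]
    intro j hj
    have hjq : j ≠ qhat := (Finset.mem_erase.1 hj).1
    refine mul_ne_zero Complex.I_ne_zero (sub_ne_zero.2 ?_)
    exact fun h => hmd j qhat hjq (by exact_mod_cast h)
  have hEq : E' qhat qhat = 0 := by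
    have := hDval.symm.trans hDzero
    exact (mul_eq_zero.1 this).resolve_left hcne
  -- extract real and imaginary parts
  have hre : A qhat qhat + (θ' * m qhat - u' qhat) = 0 := by
    have := congrArg Complex.re hEq
    simpa [hE'def] using this
  have him : u' qhat - ν' = 0 := by
    have := congrArg Complex.im hEq
    simpa [hE'def] using this
  exact ⟨u' qhat, by linarith [hGzero], by linarith [him], by linarith [hre]⟩

theorem stmt19 {n : ℕ} (hn : 2 ≤ n) (A1 A2 : Matrix (Fin n) (Fin n) ℝ)
    (hA1 : H0cond A1) (hA2 : H0cond A2)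
    (m : Fin n → ℝ) (hm : ∀ j, 0 < m j) (hmd : ∀ j k : Fin n, j ≠ k → m j ≠ m k)
    (qhat : Fin n) (hq : ∀ j, m j ≤ m qhat)
    (δ0 : ℝ) (hδ00 : 0 < δ0)
    -- positive equilibrium families of the two logistic models, extended to d = 0
    (U1 U2 : ℝ → Fin n → ℝ) (hU10 : U1 0 = m) (hU20 : U2 0 = m)
    (hU1C : ContDiffOn ℝ 1 U1 (Set.Ico 0 δ0)) (hU2C : ContDiffOn ℝ 1 U2 (Set.Ico 0 δ0))
    (hU1eq : ∀ d, 0 < d → d < δ0 → (∀ j, 0 < U1 d j) ∧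
      ∀ j, d * ∑ k, A1 j k * U1 d k + U1 d j * (m j - U1 d j) = 0)
    (hU2eq : ∀ d, 0 < d → d < δ0 → (∀ j, 0 < U2 d j) ∧
      ∀ j, d * ∑ k, A2 j k * U2 d k + U2 d j * (m j - U2 d j) = 0)
    -- the purely imaginary characteristic root branches, differentiable at d = 0
    (ν1 θ1 ν2 θ2 : ℝ → ℝ) (ν1' θ1' ν2' θ2' : ℝ)
    (hν1 : HasDerivWithinAt ν1 ν1' (Set.Ici 0) 0)
    (hθ1 : HasDerivWithinAt θ1 θ1' (Set.Ici 0) 0)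
    (hν2 : HasDerivWithinAt ν2 ν2' (Set.Ici 0) 0)
    (hθ2 : HasDerivWithinAt θ2 θ2' (Set.Ici 0) 0)
    (hν10 : ν1 0 = m qhat) (hθ10 : θ1 0 = Real.pi / 2)
    (hν20 : ν2 0 = m qhat) (hθ20 : θ2 0 = Real.pi / 2)
    (h1sing : ∀ d, 0 < d → d < δ0 → (logMat A1 m U1 d (ν1 d) (θ1 d)).det = 0)
    (h2sing : ∀ d, 0 < d → d < δ0 → (logMat A2 m U2 d (ν2 d) (θ2 d)).det = 0)
    -- T(A₁) > T(A₂)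
    (hT : -(Real.pi / 2) * A2 qhat qhat
        + (1 - Real.pi / 2) * (1 / m qhat) * ∑ k ∈ Finset.univ.erase qhat, A2 qhat k * m k
      < -(Real.pi / 2) * A1 qhat qhat
        + (1 - Real.pi / 2) * (1 / m qhat) * ∑ k ∈ Finset.univ.erase qhat, A1 qhat k * m k) :
    ∃ dhat, 0 < dhat ∧ ∀ d, 0 < d → d ≤ dhat → θ2 d / ν2 d < θ1 d / ν1 d := by
  have hmq : 0 < m qhat := hm qhat
  have hmne : m qhat ≠ 0 := ne_of_gt hmq
  obtain ⟨u1', he1, hev1, het1⟩ := key A1 m hmd qhat δ0 hδ00 U1 hU10 hU1C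
    (fun d h1 h2 => (hU1eq d h1 h2).2) ν1 θ1 ν1' θ1' hν1 hθ1 hν10 hθ10 h1sing
  obtain ⟨u2', he2, hev2, het2⟩ := key A2 m hmd qhat δ0 hδ00 U2 hU20 hU2C
    (fun d h1 h2 => (hU2eq d h1 h2).2) ν2 θ2 ν2' θ2' hν2 hθ2 hν20 hθ20 h2sing
  -- split the full sums
  have hs1 : ∑ k, A1 qhat k * m k
      = A1 qhat qhat * m qhat + ∑ k ∈ Finset.univ.erase qhat, A1 qhat k * m k :=
    (Finset.add_sum_erase _ _ (Finset.mem_univ qhat)).symm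
  have hs2 : ∑ k, A2 qhat k * m k
      = A2 qhat qhat * m qhat + ∑ k ∈ Finset.univ.erase qhat, A2 qhat k * m k :=
    (Finset.add_sum_erase _ _ (Finset.mem_univ qhat)).symm
  set S1 : ℝ := ∑ k ∈ Finset.univ.erase qhat, A1 qhat k * m k with hS1
  set S2 : ℝ := ∑ k ∈ Finset.univ.erase qhat, A2 qhat k * m k with hS2
  set L : ℝ := ((θ1' * m qhat - Real.pi / 2 * ν1') - (θ2' * m qhat - Real.pi / 2 * ν2'))
      / (m qhat) ^ 2 with hLdef
  -- L > 0
  have hXeq : ((θ1' * m qhat - Real.pi / 2 * ν1') - (θ2' * m qhat - Real.pi / 2 * ν2'))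
      * m qhat
      = -(Real.pi / 2) * (A1 qhat qhat - A2 qhat qhat) * m qhat
        + (1 - Real.pi / 2) * (S1 - S2) := by
    rw [hs1] at he1
    rw [hs2] at he2
    linear_combination m qhat * het1 - m qhat * het2
      - (Real.pi / 2) * m qhat * hev1 + (Real.pi / 2) * m qhat * hev2
      + (1 - Real.pi / 2) * he1 - (1 - Real.pi / 2) * he2
  have hXpos : 0 < ((θ1' * m qhat - Real.pi / 2 * ν1')
      - (θ2' * m qhat - Real.pi / 2 * ν2')) * m qhat := by
    rw [hXeq]
    have h := mul_pos (sub_pos.mpr hT) hmq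
    have heq : ((-(Real.pi / 2) * A1 qhat qhat + (1 - Real.pi / 2) * (1 / m qhat) * S1)
        - (-(Real.pi / 2) * A2 qhat qhat + (1 - Real.pi / 2) * (1 / m qhat) * S2)) * m qhat
        = -(Real.pi / 2) * (A1 qhat qhat - A2 qhat qhat) * m qhat
          + (1 - Real.pi / 2) * (S1 - S2) := by
      field_simp
      ring
    rw [heq] at h
    exact h
  have hL : 0 < L := by
    rw [hLdef]
    apply div_pos _ (by positivity)
    nlinarith [hXpos, hmq]
  -- derivative of the difference of Hopf values
  have hg : HasDerivWithinAt (fun d => θ1 d / ν1 d - θ2 d / ν2 d) L (Set.Ici 0) 0 := by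
    have h1 := hθ1.div hν1 (by rw [hν10]; exact hmne)
    have h2 := hθ2.div hν2 (by rw [hν20]; exact hmne)
    have h := h1.sub h2
    rw [hν10, hν20, hθ10, hθ20] at h
    refine h.congr_deriv ?_
    rw [hLdef]
    ring
  -- positivity of the slope near 0
  have hslope := hasDerivWithinAt_iff_tendsto_slope.1 hg
  rw [Set.Ici_sdiff_left] at hslope
  have hev : ∀ᶠ d in nhdsWithin (0:ℝ) (Set.Ioi 0),
      0 < slope (fun d => θ1 d / ν1 d - θ2 d / ν2 d) 0 d :=
    hslope.eventually (eventually_gt_nhds hL)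
  obtain ⟨u, hu0, husub⟩ := mem_nhdsGT_iff_exists_Ioc_subset.1 hev
  refine ⟨u, hu0, fun d hd0 hdu => ?_⟩
  have hd : d ∈ Set.Ioc (0:ℝ) u := ⟨hd0, hdu⟩
  have hslope_val : slope (fun d => θ1 d / ν1 d - θ2 d / ν2 d) 0 d
      = (θ1 d / ν1 d - θ2 d / ν2 d - (θ1 0 / ν1 0 - θ2 0 / ν2 0)) / d := by
    rw [slope_def_field]
    ring_nf
  have hzero0 : θ1 0 / ν1 0 - θ2 0 / ν2 0 = 0 := by
    rw [hν10, hν20, hθ10, hθ20]; ring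
  have hgt : 0 < (θ1 d / ν1 d - θ2 d / ν2 d) / d := by
    have := husub hd
    rw [Set.mem_setOf_eq] at this
    rwa [hslope_val, hzero0, sub_zero] at this
  have := (div_pos_iff).1 hgt
  rcases this with ⟨h1, _⟩ | ⟨_, h2⟩
  · linarith
  · linarith
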